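/- arXiv:2401.16525 — 4 statements merged into one kernel-verified Lean document; each statement's English description precedes it below -/
import Mathlib

section
/- Let U be a unitary operator whose eigenvalues all lie on the unit circle. If the convex hull of the eigenvalues of U contains the origin, then there exist two eigenvalues e^{iφ_0}, e^{iφ_1} of U such that |e^{i(φ_0 − φ_1)} − 1| ≥ √3. -/
/-!
Eigenvalues of a unitary lie on the unit circle. By Carathéodory, `0` is a convex combination
`∑ wᵢ zᵢ` of at most `d + 1` unit vectors in a `d`-dimensional real inner product space. If `c` is
the least entry of their Gram matrix, then
`0 = ‖∑ wᵢ zᵢ‖² = c + ∑ wᵢ wⱼ (⟪zᵢ, zⱼ⟫ - c) ≥ c + (1 - c) ∑ wᵢ² ≥ c + (1 - c) / (d + 1)`,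
so `d c ≤ -1`. For `ℂ = ℝ²` this gives two eigenvalues `a, b` with `⟪a, b⟫ ≤ -1/2`, i.e.
`|a b̄ - 1|² = |a - b|² = 2 - 2 ⟪a, b⟫ ≥ 3`.
-/

open scoped Matrix.Norms.L2Operator

open Finset RealInnerProductSpace in
theorem exists_card_sub_one_mul_inner_le_neg_one {E ι : Type*} [NormedAddCommGroup E]
    [InnerProductSpace ℝ E] [Fintype ι] {z : ι → E} (hz : ∀ i, ‖z i‖ = 1) {w : ι → ℝ}
    (hw₀ : ∀ i, 0 ≤ w i) (hw₁ : ∑ i, w i = 1) (hwz : ∑ i, w i • z i = 0) :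
    ∃ i j, (Fintype.card ι - 1 : ℝ) * ⟪z i, z j⟫ ≤ -1 := by
  have hne : (univ : Finset ι).Nonempty := nonempty_of_sum_ne_zero (f := w) (by simp [hw₁])
  obtain ⟨⟨i, j⟩, -, hmin⟩ := exists_min_image univ (fun p : ι × ι ↦ ⟪z p.1, z p.2⟫)
    (hne.product hne)
  refine ⟨i, j, ?_⟩
  set c := ⟪z i, z j⟫
  have hself : ∀ k, ⟪z k, z k⟫ = 1 := fun k ↦ by rw [real_inner_self_eq_norm_sq, hz k, one_pow]
  have hc : c ≤ 1 := hself i ▸ hmin (i, i) (mem_univ _)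
  have hgram : ∑ k, ∑ l, w k * w l * ⟪z k, z l⟫ = 0 := by
    have : ⟪∑ k, w k • z k, ∑ l, w l • z l⟫ = 0 := by rw [hwz, inner_zero_left]
    rw [sum_inner] at this
    simpa only [inner_sum, real_inner_smul_left, real_inner_smul_right, mul_assoc, mul_left_comm]
      using this
  have hdiag : (1 - c) * ∑ k, w k ^ 2 ≤ -c := by
    have hshift : ∑ k, ∑ l, w k * w l * (⟪z k, z l⟫ - c) = -c := by
      simp only [mul_sub, sum_sub_distrib, hgram, ← sum_mul, ← mul_sum, hw₁]; ring
    calc (1 - c) * ∑ k, w k ^ 2 = ∑ k, w k * w k * (⟪z k, z k⟫ - c) := by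
          rw [mul_sum]; exact sum_congr rfl fun k _ ↦ by rw [hself]; ring
      _ ≤ ∑ k, ∑ l, w k * w l * (⟪z k, z l⟫ - c) := by
          refine sum_le_sum fun k _ ↦ single_le_sum (f := fun l ↦ w k * w l * (⟪z k, z l⟫ - c))
            (fun l _ ↦ ?_) (mem_univ k)
          exact mul_nonneg (mul_nonneg (hw₀ k) (hw₀ l)) (sub_nonneg.2 (hmin (k, l) (mem_univ _)))
      _ = -c := hshift
  have hcs : 1 ≤ (Fintype.card ι : ℝ) * ∑ k, w k ^ 2 := by
    simpa [hw₁] using sq_sum_le_card_mul_sum_sq (s := univ) (f := w)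
  nlinarith

open RealInnerProductSpace in
theorem exists_finrank_mul_inner_le_neg_one_of_zero_mem_convexHull {E : Type*}
    [NormedAddCommGroup E] [InnerProductSpace ℝ E] [FiniteDimensional ℝ E] {S : Set E}
    (hS : S ⊆ Metric.sphere 0 1) (h0 : (0 : E) ∈ convexHull ℝ S) :
    ∃ a ∈ S, ∃ b ∈ S, (Module.finrank ℝ E : ℝ) * ⟪a, b⟫ ≤ -1 := by
  obtain ⟨ι, _, z, w, hzS, hind, hw₀, hw₁, hwz⟩ := eq_pos_convex_span_of_mem_convexHull h0
  have hnorm : ∀ i, ‖z i‖ = 1 := fun i ↦ by simpa using hS (hzS ⟨i, rfl⟩)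
  obtain ⟨i, j, hij⟩ :=
    exists_card_sub_one_mul_inner_le_neg_one hnorm (fun i ↦ (hw₀ i).le) hw₁ hwz
  have hpos : (1 : ℝ) ≤ Fintype.card ι := by exact_mod_cast Fintype.card_pos_iff.2 ⟨i⟩
  have hcard : (Fintype.card ι : ℝ) - 1 ≤ Module.finrank ℝ E := by
    have := Submodule.finrank_le (vectorSpan ℝ (Set.range z))
    have := hind.card_le_finrank_succ
    rw [sub_le_iff_le_add]
    exact_mod_cast (by omega : Fintype.card ι ≤ Module.finrank ℝ E + 1)
  have hneg : ⟪z i, z j⟫ ≤ 0 := by nlinarith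
  refine ⟨z i, hzS ⟨i, rfl⟩, z j, hzS ⟨j, rfl⟩, ?_⟩
  linarith [mul_le_mul_of_nonpos_right hcard hneg]

theorem Complex.norm_mul_conj_sub_one {a b : ℂ} (hb : ‖b‖ = 1) :
    ‖a * (starRingEnd ℂ) b - 1‖ = ‖a - b‖ := by
  have hbb : b * (starRingEnd ℂ) b = 1 := by
    rw [Complex.mul_conj, Complex.normSq_eq_norm_sq, hb]; norm_num
  rw [← hbb, ← sub_mul, norm_mul, Complex.norm_conj, hb, mul_one]

/-- If the convex hull of the (unit-circle) eigenvalues of a unitary `U` contains the origin,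
then there are two eigenvalues `a = e^{iφ₀}`, `b = e^{iφ₁}` with `|e^{i(φ₀−φ₁)} − 1| ≥ √3`. -/
theorem stmt_2 (n : ℕ) (U : Matrix (Fin n) (Fin n) ℂ)
    (hU : U ∈ Matrix.unitaryGroup (Fin n) ℂ)
    (h0 : (0 : ℂ) ∈ convexHull ℝ (spectrum ℂ U)) :
    ∃ a ∈ spectrum ℂ U, ∃ b ∈ spectrum ℂ U,
      Real.sqrt 3 ≤ ‖a * (starRingEnd ℂ) b - 1‖ := by
  have hS := spectrum.subset_circle_of_unitary (𝕜 := ℂ) hU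
  obtain ⟨a, ha, b, hb, hab⟩ := exists_finrank_mul_inner_le_neg_one_of_zero_mem_convexHull hS h0
  have hna : ‖a‖ = 1 := by simpa using hS ha
  have hnb : ‖b‖ = 1 := by simpa using hS hb
  refine ⟨a, ha, b, hb, ?_⟩
  rw [Complex.norm_mul_conj_sub_one hnb, Real.sqrt_le_left (norm_nonneg _), norm_sub_sq_real,
    hna, hnb]
  rw [Complex.finrank_real_complex] at hab
  push_cast at hab
  linarith
end

section
/- Suppose t lies in the convex hull of the eigenvalues of a unitary U, and real numbers γ, α satisfy δ(U) ≤ γ ≤ α·δ(U), where δ(U) = max_{a,b}|λ_a − λ_b| is the eigenvalue diameter of U. Then ‖U − I‖ ≤ γ + |t − 1| ≤ (1 + 2α)‖U − I‖. -/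
open scoped Matrix.Norms.L2Operator

/-!
For a normal element `a` of a C⋆-algebra, the continuous functional calculus makes `‖a - w‖` the
largest distance from `w` to the spectrum `σ a`. Every point of `σ a` lies within `diam σ a` of any
point `t` of its convex hull, which gives `‖a - w‖ ≤ diam σ a + ‖t - w‖`. Conversely `σ a`, and
with it its convex hull, lies in the closed ball of radius `‖a - w‖` about `w`, so
`‖t - w‖ ≤ ‖a - w‖` and `diam σ a ≤ 2 ‖a - w‖`.
-/

open Metric

theorem sSup_norm_sub_eq_diam {E : Type*} [SeminormedAddCommGroup E] {s : Set E}
    (hs : Bornology.IsBounded s) :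
    sSup {r : ℝ | ∃ a ∈ s, ∃ b ∈ s, r = ‖a - b‖} = diam s := by
  rcases s.eq_empty_or_nonempty with rfl | ⟨x, hx⟩
  · simp
  have hle : ∀ r ∈ {r : ℝ | ∃ a ∈ s, ∃ b ∈ s, r = ‖a - b‖}, r ≤ diam s := by
    rintro r ⟨a, ha, b, hb, rfl⟩
    exact (dist_eq_norm a b).symm ▸ dist_le_diam_of_mem hs ha hb
  refine le_antisymm (csSup_le ⟨_, x, hx, x, hx, rfl⟩ hle) ?_
  refine diam_le_of_forall_dist_le (le_csSup_of_le ⟨_, hle⟩ ⟨x, hx, x, hx, rfl⟩ (norm_nonneg _))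
    fun a ha b hb => ?_
  exact (dist_eq_norm a b).symm ▸ le_csSup ⟨_, hle⟩ ⟨a, ha, b, hb, rfl⟩

section Banach

variable {𝕜 A : Type*} [NormedField 𝕜] [NormedRing A] [NormedAlgebra 𝕜 A] [CompleteSpace A]
  [NormOneClass A]

theorem spectrum.subset_closedBall_norm_sub (a : A) (w : 𝕜) :
    spectrum 𝕜 a ⊆ closedBall w ‖a - algebraMap 𝕜 A w‖ := by
  intro z hz
  rw [mem_closedBall, dist_eq_norm]
  apply spectrum.norm_le_norm_of_mem
  rw [← spectrum.sub_singleton_eq]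
  exact Set.sub_mem_sub hz rfl

theorem spectrum.diam_le_two_mul_norm_sub (a : A) (w : 𝕜) :
    diam (spectrum 𝕜 a) ≤ 2 * ‖a - algebraMap 𝕜 A w‖ :=
  (diam_mono (spectrum.subset_closedBall_norm_sub a w) isBounded_closedBall).trans
    (diam_closedBall (norm_nonneg _))

theorem spectrum.norm_sub_le_of_mem_convexHull [NormedSpace ℝ 𝕜] {a : A} {t : 𝕜}
    (ht : t ∈ convexHull ℝ (spectrum 𝕜 a)) (w : 𝕜) :
    ‖t - w‖ ≤ ‖a - algebraMap 𝕜 A w‖ := by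
  simpa [dist_eq_norm] using
    (convex_closedBall w _).convexHull_subset_iff.2 (spectrum.subset_closedBall_norm_sub a w) ht

end Banach

section CStarAlgebra

variable {A : Type*} [CStarAlgebra A]

theorem IsStarNormal.norm_sub_algebraMap_le (a : A) [IsStarNormal a] {w : ℂ} {c : ℝ}
    (hc : 0 ≤ c) (h : spectrum ℂ a ⊆ closedBall w c) :
    ‖a - algebraMap ℂ A w‖ ≤ c := by
  have : a - algebraMap ℂ A w = cfc (fun z => z - w) a := by
    rw [cfc_sub .., cfc_id' .., cfc_const ..]
  rw [this]
  exact norm_cfc_le hc fun z hz => by simpa [dist_eq_norm] using h hz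

theorem IsStarNormal.norm_sub_algebraMap_le_diam_spectrum_add (a : A) [IsStarNormal a] {t : ℂ}
    (ht : t ∈ convexHull ℝ (spectrum ℂ a)) (w : ℂ) :
    ‖a - algebraMap ℂ A w‖ ≤ diam (spectrum ℂ a) + ‖t - w‖ := by
  refine IsStarNormal.norm_sub_algebraMap_le a (by positivity) fun z hz => ?_
  have hzt : dist z t ≤ diam (spectrum ℂ a) := by
    rw [← convexHull_diam]
    exact dist_le_diam_of_mem (isBounded_convexHull.2 (spectrum.isBounded a))
      (subset_convexHull ℝ _ hz) ht
  rw [mem_closedBall, dist_eq_norm]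
  calc ‖z - w‖ ≤ ‖z - t‖ + ‖t - w‖ := norm_sub_le_norm_sub_add_norm_sub z t w
    _ ≤ diam (spectrum ℂ a) + ‖t - w‖ := by rw [← dist_eq_norm]; gcongr

theorem IsStarNormal.norm_sub_algebraMap_le_add_and_add_le (a : A) [IsStarNormal a] {t : ℂ}
    (ht : t ∈ convexHull ℝ (spectrum ℂ a)) (w : ℂ) {γ α : ℝ} (hα : 0 ≤ α)
    (hγ₁ : diam (spectrum ℂ a) ≤ γ) (hγ₂ : γ ≤ α * diam (spectrum ℂ a)) :
    ‖a - algebraMap ℂ A w‖ ≤ γ + ‖t - w‖ ∧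
      γ + ‖t - w‖ ≤ (1 + 2 * α) * ‖a - algebraMap ℂ A w‖ := by
  have : Nontrivial A := by
    by_contra h
    rw [not_nontrivial_iff_subsingleton] at h
    simp [spectrum.of_subsingleton] at ht
  have hdiam := spectrum.diam_le_two_mul_norm_sub a w
  have ht_le := spectrum.norm_sub_le_of_mem_convexHull ht w
  have hαdiam := mul_le_mul_of_nonneg_left hdiam hα
  constructor
  · linarith [norm_sub_algebraMap_le_diam_spectrum_add a ht w]
  · linarith

end CStarAlgebra

theorem stmt_7_general (n : ℕ) (U : Matrix (Fin n) (Fin n) ℂ)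
    (hU : U ∈ Matrix.unitaryGroup (Fin n) ℂ) (t : ℂ)
    (ht : t ∈ convexHull ℝ (spectrum ℂ U)) (γ α : ℝ) (hα : 1 ≤ α)
    (hγ₁ : sSup {r : ℝ | ∃ a ∈ spectrum ℂ U, ∃ b ∈ spectrum ℂ U, r = ‖a - b‖} ≤ γ)
    (hγ₂ : γ ≤ α * sSup {r : ℝ | ∃ a ∈ spectrum ℂ U, ∃ b ∈ spectrum ℂ U, r = ‖a - b‖}) :
    ‖U - 1‖ ≤ γ + ‖t - 1‖ ∧ γ + ‖t - 1‖ ≤ (1 + 2 * α) * ‖U - 1‖ := by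
  have : IsStarNormal U := isStarNormal_of_mem_unitary hU
  rw [sSup_norm_sub_eq_diam (spectrum.isBounded U)] at hγ₁ hγ₂
  simpa only [map_one] using
    IsStarNormal.norm_sub_algebraMap_le_add_and_add_le U ht 1 (by linarith) hγ₁ hγ₂

/-- If `t` lies in the convex hull of the eigenvalues of a unitary `U`, and
`δ(U) ≤ γ ≤ α·δ(U)` where `δ(U)` is the eigenvalue diameter of `U`, then
`‖U − I‖ ≤ γ + |t − 1| ≤ (1 + 2α)‖U − I‖`. -/
theorem stmt_7 (n : ℕ) (hn : 0 < n) (U : Matrix (Fin n) (Fin n) ℂ)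
    (hU : U ∈ Matrix.unitaryGroup (Fin n) ℂ) (t : ℂ)
    (ht : t ∈ convexHull ℝ (spectrum ℂ U)) (γ α : ℝ) (hα : 1 ≤ α)
    (hγ₁ : sSup {r : ℝ | ∃ a ∈ spectrum ℂ U, ∃ b ∈ spectrum ℂ U, r = ‖a - b‖} ≤ γ)
    (hγ₂ : γ ≤ α * sSup {r : ℝ | ∃ a ∈ spectrum ℂ U, ∃ b ∈ spectrum ℂ U, r = ‖a - b‖}) :
    ‖U - 1‖ ≤ γ + ‖t - 1‖ ∧ γ + ‖t - 1‖ ≤ (1 + 2 * α) * ‖U - 1‖ :=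
  stmt_7_general n U hU t ht γ α hα hγ₁ hγ₂
end

section
/- Let K_1 and K_2 be unitary operators on spaces H_1 and H_2, each with spectrum closed under complex conjugation, and set θ_p = max{φ ∈ [0,π] : e^{iφ} ∈ spec(K_p)}. If θ_1 + θ_2 < π/2, then the operator K_1 ⊗ K_2 has spectrum closed under conjugation and θ(K_1 ⊗ K_2) := max{φ ∈ [0,π] : e^{iφ} ∈ spec(K_1 ⊗ K_2)} equals θ_1 + θ_2. -/
/-!
The spectrum of `A ⊗ₖ B` is the set of products `a * b` of eigenvalues: `A ⊗ₖ B` is the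
product of the commuting matrices `A ⊗ₖ 1` and `1 ⊗ₖ B`, which have a common eigenvector in every
eigenspace of their product, and conversely `vec (vecMulVec w v)` is an eigenvector of `A ⊗ₖ B`
for `a * b` when `A *ᵥ v = a • v` and `B *ᵥ w = b • w`. The eigenvalues of a unitary lie on the
unit circle, and closedness under conjugation turns the bound on the angles in `[0, π]` into
`|arg z| ≤ θ` on the whole spectrum. Since `θ₁ + θ₂ < π`, the arguments of the two factors add
without wrapping around, so the largest angle of a product of eigenvalues is `θ₁ + θ₂`.
-/

open scoped Kronecker Pointwise ComplexConjugate

namespace Module.End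

theorem HasEigenvector.of_restrict {R M : Type*} [CommRing R] [AddCommGroup M] [Module R M]
    {f : End R M} {p : Submodule R M} {hf : Set.MapsTo f p p} {μ : R} {v : p}
    (hv : HasEigenvector (f.restrict hf) μ v) : f.HasEigenvector μ v :=
  hasEigenvector_iff.mpr ⟨mem_eigenspace_iff.mpr (congrArg Subtype.val hv.apply_eq_smul),
    by simpa using hv.2⟩

variable {K V : Type*} [Field K] [IsAlgClosed K] [AddCommGroup V] [Module K V]
  [FiniteDimensional K V]

theorem exists_hasEigenvector_of_commute [Nontrivial V] {f g : End K V} (h : Commute f g) :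
    ∃ a b v, f.HasEigenvector a v ∧ g.HasEigenvector b v := by
  obtain ⟨b, hb⟩ := g.exists_eigenvalue
  obtain ⟨w, hw⟩ := hb.exists_hasEigenvector
  have : Nontrivial (g.eigenspace b) := nontrivial_of_ne ⟨w, hw.1⟩ 0 (by simpa using hw.2)
  have hfE : Set.MapsTo f (g.eigenspace b) (g.eigenspace b) :=
    mapsTo_genEigenspace_of_comm h.symm b 1
  obtain ⟨a, ha⟩ := exists_eigenvalue (f.restrict hfE)
  obtain ⟨v, hv⟩ := ha.exists_hasEigenvector
  exact ⟨a, b, v, hv.of_restrict, hasEigenvector_iff.mpr ⟨v.2, hv.of_restrict.2⟩⟩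

theorem spectrum_mul_subset_of_commute {f g : End K V} (h : Commute f g) :
    spectrum K (f * g) ⊆ spectrum K f * spectrum K g := by
  intro μ hμ
  set E := (f * g).eigenspace μ
  obtain ⟨w, hw⟩ := (hasEigenvalue_iff_mem_spectrum.mpr hμ).exists_hasEigenvector
  have : Nontrivial E := nontrivial_of_ne ⟨w, hw.1⟩ 0 (by simpa using hw.2)
  have hfE : Set.MapsTo f E E :=
    mapsTo_genEigenspace_of_comm ((Commute.refl f).mul_left h.symm) μ 1
  have hgE : Set.MapsTo g E E :=
    mapsTo_genEigenspace_of_comm (h.mul_left (Commute.refl g)) μ 1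
  obtain ⟨a, b, v, hfv, hgv⟩ :=
    exists_hasEigenvector_of_commute (LinearMap.restrict_commute h hfE hgE)
  replace hfv := hfv.of_restrict
  replace hgv := hgv.of_restrict
  have hμv : μ • (v : V) = (a * b) • (v : V) := by
    rw [← mem_eigenspace_iff.mp v.2, mul_apply, hgv.apply_eq_smul, map_smul, hfv.apply_eq_smul,
      smul_smul, mul_comm]
  refine ⟨a, hasEigenvalue_iff_mem_spectrum.mp (hasEigenvalue_of_hasEigenvector hfv),
    b, hasEigenvalue_iff_mem_spectrum.mp (hasEigenvalue_of_hasEigenvector hgv),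
    (smul_left_injective K hfv.2 hμv).symm⟩

end Module.End

namespace Matrix

section CommRing

variable {R : Type*} [CommRing R] {l n : Type*} [Fintype l] [DecidableEq l] [Fintype n]
  [DecidableEq n]

theorem spectrum_kronecker_one_subset (A : Matrix l l R) :
    spectrum R (A ⊗ₖ (1 : Matrix n n R)) ⊆ spectrum R A := by
  convert AlgHom.spectrum_apply_subset
    ((kroneckerAlgEquiv l n R).toAlgHom.comp Algebra.TensorProduct.includeLeft) A
  simp

theorem spectrum_one_kronecker_subset (B : Matrix n n R) :
    spectrum R ((1 : Matrix l l R) ⊗ₖ B) ⊆ spectrum R B := by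
  convert AlgHom.spectrum_apply_subset
    ((kroneckerAlgEquiv l n R).toAlgHom.comp Algebra.TensorProduct.includeRight) B
  simp

end CommRing

variable {K : Type*} [Field K] {l n : Type*} [Fintype l] [DecidableEq l] [Fintype n]
  [DecidableEq n]

theorem mem_spectrum_iff_exists_mulVec_eq_smul {A : Matrix n n K} {μ : K} :
    μ ∈ spectrum K A ↔ ∃ v ≠ 0, A *ᵥ v = μ • v := by
  rw [← spectrum_toLin', ← Module.End.hasEigenvalue_iff_mem_spectrum]
  constructor
  · intro h
    obtain ⟨v, hv⟩ := h.exists_hasEigenvector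
    exact ⟨v, hv.2, by simpa using hv.apply_eq_smul⟩
  · rintro ⟨v, hv0, hv⟩
    refine Module.End.hasEigenvalue_of_hasEigenvector (Module.End.hasEigenvector_iff.mpr ⟨?_, hv0⟩)
    simpa [Module.End.mem_eigenspace_iff] using hv

theorem spectrum_mul_subset_of_commute [IsAlgClosed K] {A B : Matrix n n K} (h : Commute A B) :
    spectrum K (A * B) ⊆ spectrum K A * spectrum K B := by
  simpa only [← AlgEquiv.spectrum_eq (toLinAlgEquiv' (R := K) (n := n)), map_mul] using
    Module.End.spectrum_mul_subset_of_commute (h.map toLinAlgEquiv')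

theorem mul_mem_spectrum_kronecker {A : Matrix l l K} {B : Matrix n n K} {a b : K}
    (ha : a ∈ spectrum K A) (hb : b ∈ spectrum K B) : a * b ∈ spectrum K (A ⊗ₖ B) := by
  obtain ⟨v, hv0, hv⟩ := mem_spectrum_iff_exists_mulVec_eq_smul.mp ha
  obtain ⟨w, hw0, hw⟩ := mem_spectrum_iff_exists_mulVec_eq_smul.mp hb
  refine mem_spectrum_iff_exists_mulVec_eq_smul.mpr ⟨vec (vecMulVec w v), ?_, ?_⟩
  · obtain ⟨i, hi⟩ := Function.ne_iff.mp hv0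
    obtain ⟨j, hj⟩ := Function.ne_iff.mp hw0
    exact Function.ne_iff.mpr ⟨(i, j), mul_ne_zero hj hi⟩
  · rw [kronecker_mulVec_vec, mul_vecMulVec, vecMulVec_mul, vecMul_transpose, hv, hw,
      smul_vecMulVec, vecMulVec_smul, smul_smul, vec_smul, mul_comm]

theorem spectrum_kronecker [IsAlgClosed K] (A : Matrix l l K) (B : Matrix n n K) :
    spectrum K (A ⊗ₖ B) = spectrum K A * spectrum K B := by
  refine subset_antisymm ?_ ?_
  · have hAB : A ⊗ₖ B = (A ⊗ₖ (1 : Matrix n n K)) * ((1 : Matrix l l K) ⊗ₖ B) := by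
      rw [← mul_kronecker_mul, Matrix.mul_one, Matrix.one_mul]
    have hcomm : Commute (A ⊗ₖ (1 : Matrix n n K)) ((1 : Matrix l l K) ⊗ₖ B) := by
      rw [Commute, SemiconjBy, ← mul_kronecker_mul, ← mul_kronecker_mul]
      simp
    rw [hAB]
    exact (spectrum_mul_subset_of_commute hcomm).trans
      (Set.mul_subset_mul (spectrum_kronecker_one_subset A) (spectrum_one_kronecker_subset B))
  · rintro _ ⟨a, ha, b, hb, rfl⟩
    exact mul_mem_spectrum_kronecker ha hb

end Matrix

open scoped Matrix.Norms.L2Operator in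
theorem Matrix.spectrum_subset_sphere_of_mem_unitaryGroup {n : Type*} [Fintype n] [DecidableEq n]
    {U : Matrix n n ℂ} (hU : U ∈ unitaryGroup n ℂ) : spectrum ℂ U ⊆ Metric.sphere 0 1 :=
  spectrum.subset_circle_of_unitary hU

open Complex Metric

def arcAngles (s : Set ℂ) : Set ℝ :=
  {φ : ℝ | φ ∈ Set.Icc 0 Real.pi ∧ Complex.exp (φ * Complex.I) ∈ s}

theorem Complex.exp_arg_mul_I_of_norm_eq_one {z : ℂ} (hz : ‖z‖ = 1) : exp (arg z * I) = z := by
  simpa [hz] using norm_mul_exp_arg_mul_I z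

theorem abs_arg_le_of_isGreatest_arcAngles {s : Set ℂ} (hs : s ⊆ sphere 0 1)
    (hconj : ∀ z ∈ s, conj z ∈ s) {θ : ℝ} (hθ : IsGreatest (arcAngles s) θ) {z : ℂ}
    (hz : z ∈ s) : |arg z| ≤ θ := by
  have hz1 : ‖z‖ = 1 := by simpa using hs hz
  rcases le_or_gt 0 (arg z) with h0 | h0
  · rw [abs_of_nonneg h0]
    exact hθ.2 ⟨⟨h0, arg_le_pi z⟩, by rwa [exp_arg_mul_I_of_norm_eq_one hz1]⟩
  · have hconj_arg : arg (conj z) = -arg z := by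
      rw [arg_conj, if_neg (by linarith [Real.pi_pos])]
    rw [abs_of_neg h0, ← hconj_arg]
    refine hθ.2 ⟨⟨by linarith, by linarith [neg_pi_lt_arg z]⟩, ?_⟩
    rw [exp_arg_mul_I_of_norm_eq_one (by rwa [norm_conj])]
    exact hconj z hz

theorem isGreatest_arcAngles_mul {s t : Set ℂ} (hs : s ⊆ sphere 0 1) (ht : t ⊆ sphere 0 1)
    (hs_conj : ∀ z ∈ s, conj z ∈ s) (ht_conj : ∀ z ∈ t, conj z ∈ t) {θ₁ θ₂ : ℝ}
    (hθ₁ : IsGreatest (arcAngles s) θ₁) (hθ₂ : IsGreatest (arcAngles t) θ₂)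
    (hsum : θ₁ + θ₂ < Real.pi) : IsGreatest (arcAngles (s * t)) (θ₁ + θ₂) := by
  refine ⟨⟨⟨add_nonneg hθ₁.1.1.1 hθ₂.1.1.1, hsum.le⟩, ?_⟩, ?_⟩
  · rw [Complex.ofReal_add, add_mul, exp_add]
    exact Set.mul_mem_mul hθ₁.1.2 hθ₂.1.2
  · rintro φ ⟨⟨hφ0, hφπ⟩, a, ha, b, hb, hab⟩
    have ha0 : a ≠ 0 := ne_zero_of_mem_unit_sphere ⟨a, hs ha⟩
    have hb0 : b ≠ 0 := ne_zero_of_mem_unit_sphere ⟨b, ht hb⟩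
    have ha' := abs_le.mp (abs_arg_le_of_isGreatest_arcAngles hs hs_conj hθ₁ ha)
    have hb' := abs_le.mp (abs_arg_le_of_isGreatest_arcAngles ht ht_conj hθ₂ hb)
    have harg : arg (a * b) = arg a + arg b :=
      arg_mul ha0 hb0 ⟨by linarith, by linarith⟩
    have hφ : arg (exp (φ * I)) = φ := by
      rw [arg_exp_mul_I, toIocMod_eq_self]
      constructor <;> linarith [Real.pi_pos]
    rw [← hφ, ← hab, harg]
    linarith

theorem stmt_11_general (n m : ℕ)
    (K₁ : Matrix (Fin n) (Fin n) ℂ) (K₂ : Matrix (Fin m) (Fin m) ℂ)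
    (hK₁ : K₁ ∈ Matrix.unitaryGroup (Fin n) ℂ)
    (hK₂ : K₂ ∈ Matrix.unitaryGroup (Fin m) ℂ)
    (hconj₁ : ∀ z ∈ spectrum ℂ K₁, (starRingEnd ℂ) z ∈ spectrum ℂ K₁)
    (hconj₂ : ∀ z ∈ spectrum ℂ K₂, (starRingEnd ℂ) z ∈ spectrum ℂ K₂)
    (θ₁ θ₂ : ℝ)
    (hθ₁ : IsGreatest {φ : ℝ | φ ∈ Set.Icc 0 Real.pi ∧
        Complex.exp (φ * Complex.I) ∈ spectrum ℂ K₁} θ₁)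
    (hθ₂ : IsGreatest {φ : ℝ | φ ∈ Set.Icc 0 Real.pi ∧
        Complex.exp (φ * Complex.I) ∈ spectrum ℂ K₂} θ₂)
    (hsum : θ₁ + θ₂ < Real.pi / 2) :
    (∀ z ∈ spectrum ℂ (K₁ ⊗ₖ K₂), (starRingEnd ℂ) z ∈ spectrum ℂ (K₁ ⊗ₖ K₂)) ∧
      IsGreatest {φ : ℝ | φ ∈ Set.Icc 0 Real.pi ∧
        Complex.exp (φ * Complex.I) ∈ spectrum ℂ (K₁ ⊗ₖ K₂)} (θ₁ + θ₂) := by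
  rw [Matrix.spectrum_kronecker]
  refine ⟨?_, ?_⟩
  · rintro _ ⟨a, ha, b, hb, rfl⟩
    exact ⟨conj a, hconj₁ a ha, conj b, hconj₂ b hb, (map_mul conj a b).symm⟩
  · exact isGreatest_arcAngles_mul (Matrix.spectrum_subset_sphere_of_mem_unitaryGroup hK₁)
      (Matrix.spectrum_subset_sphere_of_mem_unitaryGroup hK₂) hconj₁ hconj₂ hθ₁ hθ₂
      (by linarith [Real.pi_pos])

/-- Additivity lemma, case (a): if `K₁, K₂` are unitaries with conjugation-closed spectra,
`θ_p = max {φ ∈ [0,π] : e^{iφ} ∈ spec(K_p)}`, and `θ₁ + θ₂ < π/2`, then the spectrum of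
`K₁ ⊗ K₂` is closed under conjugation and its maximal angle is `θ₁ + θ₂`. -/
theorem stmt_11 (n m : ℕ) (hn : 0 < n) (hm : 0 < m)
    (K₁ : Matrix (Fin n) (Fin n) ℂ) (K₂ : Matrix (Fin m) (Fin m) ℂ)
    (hK₁ : K₁ ∈ Matrix.unitaryGroup (Fin n) ℂ)
    (hK₂ : K₂ ∈ Matrix.unitaryGroup (Fin m) ℂ)
    (hconj₁ : ∀ z ∈ spectrum ℂ K₁, (starRingEnd ℂ) z ∈ spectrum ℂ K₁)
    (hconj₂ : ∀ z ∈ spectrum ℂ K₂, (starRingEnd ℂ) z ∈ spectrum ℂ K₂)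
    (θ₁ θ₂ : ℝ)
    (hθ₁ : IsGreatest {φ : ℝ | φ ∈ Set.Icc 0 Real.pi ∧
        Complex.exp (φ * Complex.I) ∈ spectrum ℂ K₁} θ₁)
    (hθ₂ : IsGreatest {φ : ℝ | φ ∈ Set.Icc 0 Real.pi ∧
        Complex.exp (φ * Complex.I) ∈ spectrum ℂ K₂} θ₂)
    (hsum : θ₁ + θ₂ < Real.pi / 2) :
    (∀ z ∈ spectrum ℂ (K₁ ⊗ₖ K₂), (starRingEnd ℂ) z ∈ spectrum ℂ (K₁ ⊗ₖ K₂)) ∧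
      IsGreatest {φ : ℝ | φ ∈ Set.Icc 0 Real.pi ∧
        Complex.exp (φ * Complex.I) ∈ spectrum ℂ (K₁ ⊗ₖ K₂)} (θ₁ + θ₂) :=
  stmt_11_general n m K₁ K₂ hK₁ hK₂ hconj₁ hconj₂ θ₁ θ₂ hθ₁ hθ₂ hsum
end

section
/- Let U be a unitary on H, and let W be a Hermitian unitary on H ⊗ H with W(x ⊗ y) = y ⊗ x (i.e., W is the swap of the two registers, so that (I ⊗ U†)W = W(U† ⊗ I)). If W = Π_{j=1}^m W_j with each W_j a Hermitian unitary and the W_j pairwise commuting, then ‖U ⊗ U† − I ⊗ I‖ ≤ Σ_{j=1}^m ‖W_j (U ⊗ I) W_j (U† ⊗ I) − I‖. -/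
open Matrix

open scoped Matrix.Norms.L2Operator Kronecker

section Aux

variable {ι : Type*} [Fintype ι] [DecidableEq ι]

private lemma norm_one_le_one' : ‖(1 : Matrix ι ι ℂ)‖ ≤ 1 := by
  have h : ‖(1 : Matrix ι ι ℂ)‖ * ‖(1 : Matrix ι ι ℂ)‖ = ‖(1 : Matrix ι ι ℂ)‖ := by
    rw [← Matrix.l2_opNorm_conjTranspose_mul_self (1 : Matrix ι ι ℂ)]
    simp
  nlinarith [norm_nonneg (1 : Matrix ι ι ℂ)]

private lemma norm_unitary_le_one {w : Matrix ι ι ℂ} (hw : wᴴ * w = 1) : ‖w‖ ≤ 1 := by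
  have h : ‖w‖ * ‖w‖ ≤ 1 := by
    rw [← Matrix.l2_opNorm_conjTranspose_mul_self w, hw]
    exact norm_one_le_one'
  nlinarith [norm_nonneg w]

private lemma mul_norm_le_left {X Y : Matrix ι ι ℂ} (hX : ‖X‖ ≤ 1) : ‖X * Y‖ ≤ ‖Y‖ :=
  (Matrix.l2_opNorm_mul X Y).trans (mul_le_of_le_one_left (norm_nonneg Y) hX)

private lemma mul_norm_le_right {X Y : Matrix ι ι ℂ} (hY : ‖Y‖ ≤ 1) : ‖X * Y‖ ≤ ‖X‖ :=
  (Matrix.l2_opNorm_mul X Y).trans (mul_le_of_le_one_right (norm_nonneg X) hY)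

/-- Key telescoping lemma. -/
private lemma telescope (A : Matrix ι ι ℂ) (hA2 : Aᴴ * A = 1)
    (l : List (Matrix ι ι ℂ)) (hl : ∀ w ∈ l, ‖w‖ ≤ 1 ∧ w * w = 1) :
    ‖A * l.prod * Aᴴ * l.reverse.prod - 1‖ ≤
      (l.map (fun w => ‖w * A * w * Aᴴ - 1‖)).sum := by
  have hAn : ‖A‖ ≤ 1 := norm_unitary_le_one hA2
  have hAn' : ‖Aᴴ‖ ≤ 1 := by rw [Matrix.l2_opNorm_conjTranspose]; exact hAn
  have hA1 : A * Aᴴ = 1 := mul_eq_one_comm.mpr hA2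
  induction l with
  | nil => simp [hA1]
  | cons w t ih =>
    have hw := hl w List.mem_cons_self
    have hwn : ‖w‖ ≤ 1 := hw.1
    have hww : w * w = 1 := hw.2
    have iht := ih (fun x hx => hl x (List.mem_cons_of_mem w hx))
    set M := t.prod with hM
    set M' := t.reverse.prod with hM'
    set D := A * M * Aᴴ * M' - 1 with hD
    -- split the telescoping step
    have e1 : (A * w * Aᴴ) * D * w
        = A * w * (Aᴴ * A) * M * Aᴴ * M' * w - A * w * Aᴴ * w := by
      rw [hD]; noncomm_ring
    rw [hA2] at e1
    have hsplit : A * (w :: t).prod * Aᴴ * (w :: t).reverse.prod - 1 =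
        (A * w * Aᴴ) * D * w + (A * w * Aᴴ * w - 1) := by
      rw [e1]
      simp only [List.prod_cons, List.reverse_cons, List.prod_append, List.prod_cons,
        List.prod_nil, mul_one, ← hM, ← hM']
      noncomm_ring
    -- bound the conjugated summand: A w Aᴴ w - 1 = w (w A w Aᴴ - 1) w
    have e2 : w * (w * A * w * Aᴴ - 1) * w = (w * w) * A * w * Aᴴ * w - w * w := by
      noncomm_ring
    rw [hww] at e2
    have hterm : ‖A * w * Aᴴ * w - 1‖ ≤ ‖w * A * w * Aᴴ - 1‖ := by
      have : A * w * Aᴴ * w - 1 = w * (w * A * w * Aᴴ - 1) * w := by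
        rw [e2]; noncomm_ring
      rw [this]
      exact (mul_norm_le_right hwn).trans (mul_norm_le_left hwn)
    have hAwA : ‖A * w * Aᴴ‖ ≤ 1 := by
      calc ‖A * w * Aᴴ‖ ≤ ‖A * w‖ := mul_norm_le_right hAn'
        _ ≤ ‖w‖ := mul_norm_le_left hAn
        _ ≤ 1 := hwn
    have hmain : ‖(A * w * Aᴴ) * D * w‖ ≤ ‖D‖ :=
      (mul_norm_le_right hwn).trans (mul_norm_le_left hAwA)
    calc ‖A * (w :: t).prod * Aᴴ * (w :: t).reverse.prod - 1‖
        = ‖(A * w * Aᴴ) * D * w + (A * w * Aᴴ * w - 1)‖ := by rw [hsplit]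
      _ ≤ ‖(A * w * Aᴴ) * D * w‖ + ‖A * w * Aᴴ * w - 1‖ := norm_add_le _ _
      _ ≤ ‖D‖ + ‖w * A * w * Aᴴ - 1‖ := add_le_add hmain hterm
      _ ≤ (List.map (fun w => ‖w * A * w * Aᴴ - 1‖) t).sum + ‖w * A * w * Aᴴ - 1‖ :=
          add_le_add iht le_rfl
      _ = (List.map (fun w => ‖w * A * w * Aᴴ - 1‖) (w :: t)).sum := by
          simp [add_comm]

private lemma reverse_prod_eq (l : List (Matrix ι ι ℂ))
    (hc : ∀ a ∈ l, ∀ b ∈ l, Commute a b) : l.reverse.prod = l.prod := by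
  induction l with
  | nil => rfl
  | cons w t ih =>
    have h1 : t.reverse.prod = t.prod :=
      ih (fun a ha b hb => hc a (List.mem_cons_of_mem w ha) b (List.mem_cons_of_mem w hb))
    have h2 : Commute w t.prod :=
      Commute.list_prod_right _ _ (fun x hx =>
        hc w List.mem_cons_self x (List.mem_cons_of_mem w hx))
    simp [List.prod_cons, List.reverse_cons, List.prod_append, h1, h2.eq]

end Aux

/-- If `W` is the swap operator on `H ⊗ H` and `W = W_1 ⋯ W_m` is a product of pairwise
commuting Hermitian unitaries, then for any unitary `U`,
`‖U ⊗ U† − I ⊗ I‖ ≤ Σ_j ‖W_j (U ⊗ I) W_j (U† ⊗ I) − I‖`. -/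
theorem stmt_19 (n m : ℕ) (U : Matrix (Fin n) (Fin n) ℂ)
    (hU : U ∈ Matrix.unitaryGroup (Fin n) ℂ)
    (W : Fin m → Matrix (Fin n × Fin n) (Fin n × Fin n) ℂ)
    (hWu : ∀ j, W j ∈ Matrix.unitaryGroup (Fin n × Fin n) ℂ)
    (hWh : ∀ j, (W j)ᴴ = W j)
    (hWc : ∀ j k, W j * W k = W k * W j)
    (hWprod : (List.ofFn W).prod =
      Matrix.of fun p q : Fin n × Fin n => if p.1 = q.2 ∧ p.2 = q.1 then (1 : ℂ) else 0) :
    ‖U ⊗ₖ Uᴴ - 1‖ ≤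
      ∑ j, ‖W j * (U ⊗ₖ (1 : Matrix (Fin n) (Fin n) ℂ)) * W j *
        (Uᴴ ⊗ₖ (1 : Matrix (Fin n) (Fin n) ℂ)) - 1‖ := by
  set S : Matrix (Fin n × Fin n) (Fin n × Fin n) ℂ :=
    Matrix.of fun p q : Fin n × Fin n => if p.1 = q.2 ∧ p.2 = q.1 then (1 : ℂ) else 0 with hS
  set A : Matrix (Fin n × Fin n) (Fin n × Fin n) ℂ := U ⊗ₖ (1 : Matrix (Fin n) (Fin n) ℂ)
    with hA
  have hAH : Aᴴ = Uᴴ ⊗ₖ (1 : Matrix (Fin n) (Fin n) ℂ) := by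
    ext ⟨a, b⟩ ⟨c, d⟩
    simp [hA, Matrix.conjTranspose_apply, Matrix.kroneckerMap_apply, Matrix.one_apply]
    split_ifs with h1 h2 h2
    · rfl
    · exact absurd h1.symm h2
    · exact absurd h2.symm h1
    · simp
  have hUU : Uᴴ * U = 1 := Matrix.mem_unitaryGroup_iff'.mp hU
  have hUU' : U * Uᴴ = 1 := Matrix.mem_unitaryGroup_iff.mp hU
  have hA2 : Aᴴ * A = 1 := by
    rw [hAH, hA, ← Matrix.mul_kronecker_mul, hUU, mul_one, Matrix.one_kronecker_one]
  -- S conjugation identity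
  have hSwap : S * (Uᴴ ⊗ₖ (1 : Matrix (Fin n) (Fin n) ℂ)) * S
      = (1 : Matrix (Fin n) (Fin n) ℂ) ⊗ₖ Uᴴ := by
    ext ⟨a, b⟩ ⟨c, d⟩
    simp [hS, Matrix.mul_apply, Fintype.sum_prod_type, ite_and, Matrix.one_apply]
  -- the main identity: A * S * Aᴴ * S = U ⊗ₖ Uᴴ
  have hkey : A * S * Aᴴ * S = U ⊗ₖ Uᴴ := by
    rw [hAH]
    calc A * S * (Uᴴ ⊗ₖ (1 : Matrix (Fin n) (Fin n) ℂ)) * S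
        = A * (S * (Uᴴ ⊗ₖ (1 : Matrix (Fin n) (Fin n) ℂ)) * S) := by noncomm_ring
      _ = A * ((1 : Matrix (Fin n) (Fin n) ℂ) ⊗ₖ Uᴴ) := by rw [hSwap]
      _ = U ⊗ₖ Uᴴ := by
          rw [hA, ← Matrix.mul_kronecker_mul, mul_one, one_mul]
  set l := List.ofFn W with hl'
  have hrev : l.reverse.prod = l.prod := by
    apply reverse_prod_eq
    intro a ha b hb
    rw [hl', List.mem_ofFn] at ha hb
    obtain ⟨j, rfl⟩ := ha
    obtain ⟨k, rfl⟩ := hb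
    exact hWc j k
  have hlw : ∀ w ∈ l, ‖w‖ ≤ 1 ∧ w * w = 1 := by
    intro w hw
    rw [hl', List.mem_ofFn] at hw
    obtain ⟨j, rfl⟩ := hw
    have h1 : (W j)ᴴ * W j = 1 := Matrix.mem_unitaryGroup_iff'.mp (hWu j)
    have h2 := h1
    rw [hWh j] at h2
    exact ⟨norm_unitary_le_one h1, h2⟩
  have := telescope A hA2 l hlw
  rw [hrev, hWprod] at this
  rw [hkey] at this
  refine this.trans ?_
  rw [hl', List.map_ofFn, List.sum_ofFn]
  apply le_of_eq
  apply Finset.sum_congr rfl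
  intro j _
  simp only [Function.comp_apply, hA, hAH]
  rw [← hA, hAH]
end
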